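/- Let γ ∈ 𝒫(𝕋^d × 𝕋^d) have finite relative entropy H(γ | Leb⊗Leb) < ∞. Then ν·H(γ | R^ν_{0,1}) → (1/2)∫ dist(x,y)² dγ(x,y) as ν → 0, where R^ν_{0,1} has density τ_ν(y−x) with respect to Leb⊗Leb on 𝕋^d × 𝕋^d. -/

import Mathlib

open MeasureTheory Real Filter

noncomputable section

instance : Fact ((0:ℝ) < 1) := ⟨one_pos⟩

/-- The flat torus `𝕋^d = (ℝ/ℤ)^d`. -/
abbrev Torus (d : ℕ) := Fin d → AddCircle (1:ℝ)

/-- The canonical lift of a point of `ℝ/ℤ` to `[0,1)`. -/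
def liftT (x : AddCircle (1:ℝ)) : ℝ := (AddCircle.equivIco 1 0 x).1

/-- The heat kernel `τ_s` on the torus at time `s`, as a periodized Gaussian. -/
def heatKernel (d : ℕ) (s : ℝ) (z : Torus d) : ℝ :=
  (2 * π * s) ^ (-(d:ℝ)/2) *
    ∑' l : Fin d → ℤ, Real.exp (-(∑ i, (liftT (z i) + (l i : ℝ))^2) / (2*s))

/-- The squared geodesic distance on the torus. -/
def distSq {d : ℕ} (x y : Torus d) : ℝ := ∑ i, (dist (x i) (y i))^2

/-- Relative entropy (Kullback–Leibler divergence) `H(p|r) = ∫ log (dp/dr) dp`. -/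
def relEnt {X : Type*} [MeasurableSpace X] (p r : Measure X) : ℝ :=
  ∫ x, Real.log ((p.rnDeriv r x).toReal) ∂p

/-- The joint law at times `0,1` of the reversible Brownian motion with diffusivity `ν`
on the torus: the measure with density `τ_ν(y−x)` with respect to `Leb ⊗ Leb`. -/
def Rnu01 (d : ℕ) (ν : ℝ) : Measure (Torus d × Torus d) :=
  (volume : Measure (Torus d × Torus d)).withDensity
    (fun p => ENNReal.ofReal (heatKernel d ν (p.2 - p.1)))

/-!
Changing the reference measure from `Leb ⊗ Leb` to `R^ν_{0,1}` gives
`H(γ | R^ν_{0,1}) = H(γ | Leb ⊗ Leb) - ∫ log τ_ν(y - x) dγ`, and after multiplication by `ν` the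
first term vanishes in the limit. For the second, the Gaussian bounds
`exp (-|z|² / 2ν) ≤ (2πν)^{d/2} τ_ν(z) ≤ C_d exp (-|z|² / 2ν)`, with `|z|` the distance of `z` to
`0` on the torus, show that `ν log τ_ν(z) → -|z|² / 2` uniformly on `𝕋^d`. The lower bound keeps
only the lattice translate of `z` nearest to `0`; in the upper bound the translate by `l` pays at
least `|l_i| - 1` per coordinate in the exponent once `ν ≤ 3/8`, which makes the sum over `l`
converge to a constant `C_d`.
-/

open Topology

theorem relEnt_withDensity {X : Type*} [MeasurableSpace X] {p μ : Measure X}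
    [SigmaFinite p] [SigmaFinite μ] (hpμ : p ≪ μ) {f : X → ℝ} (hf : Measurable f)
    (hf_pos : ∀ᵐ x ∂μ, 0 < f x)
    (hp : Integrable (fun x => log (p.rnDeriv μ x).toReal) p)
    (hlogf : Integrable (fun x => log (f x)) p) :
    relEnt p (μ.withDensity fun x => ENNReal.ofReal (f x)) = relEnt p μ - ∫ x, log (f x) ∂p := by
  have hrn := hpμ.ae_eq <| Measure.rnDeriv_withDensity_right (f := fun x => ENNReal.ofReal (f x))
    p μ hf.ennreal_ofReal.aemeasurable
    (hf_pos.mono fun x hx => (ENNReal.ofReal_pos.2 hx).ne')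
    (ae_of_all _ fun _ => ENNReal.ofReal_ne_top)
  have hlog : (fun x => log (p.rnDeriv (μ.withDensity fun x => ENNReal.ofReal (f x)) x).toReal)
      =ᵐ[p] fun x => log (p.rnDeriv μ x).toReal - log (f x) := by
    filter_upwards [hrn, hpμ.ae_le hf_pos, Measure.rnDeriv_pos hpμ,
      hpμ.ae_le (Measure.rnDeriv_lt_top p μ)] with x hx hfx hpos hlt
    rw [hx, ENNReal.toReal_mul, ENNReal.toReal_inv, ENNReal.toReal_ofReal hfx.le,
      log_mul (inv_ne_zero hfx.ne') (ENNReal.toReal_pos hpos.ne' hlt.ne).ne', log_inv]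
    ring
  rw [relEnt, relEnt, integral_congr_ae hlog, integral_sub hp hlogf]

section UniformLimit

variable {α ι E : Type*} [MeasurableSpace α] {μ : Measure α} [IsFiniteMeasure μ]
  [NormedAddCommGroup E] {l : Filter ι} {F : ι → α → E} {f : α → E}

theorem TendstoUniformly.eventually_integrable (h : TendstoUniformly F f l)
    (hF : ∀ᶠ i in l, AEStronglyMeasurable (F i) μ) (hf : Integrable f μ) :
    ∀ᶠ i in l, Integrable (F i) μ := by
  filter_upwards [Metric.tendstoUniformly_iff.1 h 1 one_pos, hF] with i hi hFi
  refine (hf.norm.add (integrable_const 1)).mono' hFi (ae_of_all _ fun x => ?_)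
  calc ‖F i x‖ ≤ ‖f x‖ + ‖F i x - f x‖ := norm_le_norm_add_norm_sub' _ _
    _ ≤ ‖f x‖ + 1 := by rw [← dist_eq_norm, dist_comm]; exact add_le_add_right (hi x).le _

theorem TendstoUniformly.tendsto_integral [NormedSpace ℝ E] (h : TendstoUniformly F f l)
    (hF : ∀ᶠ i in l, Integrable (F i) μ) (hf : Integrable f μ) :
    Tendsto (fun i => ∫ x, F i x ∂μ) l (𝓝 (∫ x, f x ∂μ)) := by
  rw [Metric.tendsto_nhds]
  intro ε hε
  have hm : 0 ≤ μ.real Set.univ := measureReal_nonneg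
  filter_upwards [Metric.tendstoUniformly_iff.1 h (ε / (μ.real Set.univ + 1)) (by positivity),
    hF] with i hi hFi
  rw [dist_eq_norm, ← integral_sub hFi hf]
  calc ‖∫ x, F i x - f x ∂μ‖ ≤ ε / (μ.real Set.univ + 1) * μ.real Set.univ :=
        norm_integral_le_of_norm_le_const <| ae_of_all _ fun x => by
          rw [← dist_eq_norm, dist_comm]; exact (hi x).le
    _ < ε := by
      rw [div_mul_eq_mul_div, div_lt_iff₀ (by positivity)]
      nlinarith

end UniformLimit

lemma liftT_mem_Ico (x : AddCircle (1:ℝ)) : liftT x ∈ Set.Ico (0:ℝ) 1 := by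
  simpa [liftT] using (AddCircle.equivIco 1 0 x).2

lemma coe_liftT (x : AddCircle (1:ℝ)) : ((liftT x : ℝ) : AddCircle (1:ℝ)) = x :=
  (AddCircle.equivIco 1 0).symm_apply_apply x

lemma measurable_liftT : Measurable liftT :=
  measurable_subtype_coe.comp (AddCircle.measurableEquivIco 1 0).measurable

lemma norm_eq_abs_liftT_sub_round (x : AddCircle (1:ℝ)) :
    ‖x‖ = |liftT x - round (liftT x)| := by
  conv_lhs => rw [← coe_liftT x]
  exact UnitAddCircle.norm_eq

lemma norm_sq_le_sq_liftT_add_add_mul (x : AddCircle (1:ℝ)) (l : ℤ) {c : ℝ} (hc0 : 0 ≤ c)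
    (hc : c ≤ 3/4) : ‖x‖ ^ 2 ≤ (liftT x + l) ^ 2 + c * (1 - |(l:ℝ)|) := by
  obtain ⟨h0, h1⟩ := liftT_mem_Ico x
  have hhalf : ‖x‖ ≤ 1 / 2 := by simpa using AddCircle.norm_le_half_period (p := (1:ℝ)) one_ne_zero
  have hround : ‖x‖ ^ 2 ≤ (liftT x + l) ^ 2 := by
    rw [sq_le_sq, abs_norm, norm_eq_abs_liftT_sub_round]
    simpa using round_le (liftT x) (-l)
  have hx0 := norm_nonneg x
  rcases (show l ≤ -2 ∨ l = -1 ∨ l = 0 ∨ 1 ≤ l by omega) with hl | rfl | rfl | hl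
  · have hl' : (l:ℝ) ≤ -2 := by exact_mod_cast hl
    rw [abs_of_neg (by linarith)]
    nlinarith
  · norm_num at hround ⊢; linarith
  · norm_num at hround ⊢; linarith
  · have hl' : (1:ℝ) ≤ l := by exact_mod_cast hl
    rw [abs_of_pos (by linarith)]
    nlinarith

lemma distSq_zero_left {d : ℕ} (z : Torus d) : distSq 0 z = ∑ i, ‖z i‖ ^ 2 := by
  simp [distSq]

lemma distSq_zero_sub {d : ℕ} (x y : Torus d) : distSq 0 (y - x) = distSq x y := by
  simp [distSq, dist_eq_norm]

lemma distSq_zero_le_sum_sq_liftT_add_add_mul {d : ℕ} (z : Torus d) (l : Fin d → ℤ) {c : ℝ}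
    (hc0 : 0 ≤ c) (hc : c ≤ 3/4) :
    distSq 0 z ≤ ∑ i, (liftT (z i) + l i) ^ 2 + c * ∑ i, (1 - |(l i : ℝ)|) := by
  rw [distSq_zero_left, Finset.mul_sum, ← Finset.sum_add_distrib]
  exact Finset.sum_le_sum fun i _ => norm_sq_le_sq_liftT_add_add_mul (z i) (l i) hc0 hc

lemma sum_sq_liftT_add_neg_round {d : ℕ} (z : Torus d) :
    ∑ i, (liftT (z i) + ((-round (liftT (z i)) : ℤ) : ℝ)) ^ 2 = distSq 0 z := by
  simp [distSq_zero_left, norm_eq_abs_liftT_sub_round, sub_eq_add_neg]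

lemma summable_exp_one_sub_abs : Summable fun n : ℤ => exp (1 - |(n : ℝ)|) := by
  have h : Summable fun n : ℕ => exp (1 - n) := by
    simpa [sub_eq_add_neg, exp_add, ← exp_nat_mul] using
      (summable_geometric_of_lt_one (exp_pos (-1)).le
        (exp_lt_one_iff.2 (by norm_num))).mul_left (exp 1)
  exact .of_nat_of_neg (h.congr fun n => by simp) (h.congr fun n => by simp)

lemma summable_fin_pi_prod_of_nonneg {β : Type*} {d : ℕ} {f : β → ℝ} (hf0 : 0 ≤ f)
    (hf : Summable f) : Summable fun l : Fin d → β => ∏ i, f (l i) := by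
  induction d with
  | zero => exact summable_of_hasFiniteSupport (Set.toFinite _)
  | succ n ih =>
    have h : Summable fun q : β × (Fin n → β) => f q.1 * ∏ i, f (q.2 i) :=
      hf.mul_of_nonneg (g := fun l : Fin n → β => ∏ i, f (l i)) ih hf0
        fun _ => Finset.prod_nonneg fun i _ => hf0 _
    refine (Equiv.summable_iff (Fin.consEquiv fun _ : Fin (n + 1) => β)).1 (h.congr fun q => ?_)
    simp [Fin.prod_univ_succ]

def heatKernelTerm (d : ℕ) (ν : ℝ) (z : Torus d) (l : Fin d → ℤ) : ℝ :=
  exp (-(∑ i, (liftT (z i) + (l i : ℝ)) ^ 2) / (2 * ν))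

section HeatKernel

variable {d : ℕ} {ν : ℝ}

lemma heatKernel_eq_tsum (z : Torus d) :
    heatKernel d ν z = (2 * π * ν) ^ (-(d:ℝ) / 2) * ∑' l, heatKernelTerm d ν z l :=
  rfl

lemma heatKernelTerm_le (hν : 0 < ν) (hν' : ν ≤ 3/8) (z : Torus d) (l : Fin d → ℤ) :
    heatKernelTerm d ν z l ≤ exp (-distSq 0 z / (2 * ν)) * ∏ i, exp (1 - |(l i : ℝ)|) := by
  have h2ν : 0 < 2 * ν := by linarith
  have hdist := distSq_zero_le_sum_sq_liftT_add_add_mul z l h2ν.le (by linarith)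
  rw [heatKernelTerm, ← exp_sum, ← exp_add, exp_le_exp, div_add' _ _ _ h2ν.ne',
    div_le_div_iff_of_pos_right h2ν]
  linarith

lemma summable_prod_exp_one_sub_abs :
    Summable fun l : Fin d → ℤ => ∏ i, exp (1 - |(l i : ℝ)|) :=
  summable_fin_pi_prod_of_nonneg (f := fun n : ℤ => exp (1 - |(n : ℝ)|)) (fun _ => (exp_pos _).le)
    summable_exp_one_sub_abs

lemma summable_heatKernelTerm (hν : 0 < ν) (hν' : ν ≤ 3/8) (z : Torus d) :
    Summable (heatKernelTerm d ν z) :=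
  .of_nonneg_of_le (fun _ => (exp_pos _).le) (heatKernelTerm_le hν hν' z)
    (summable_prod_exp_one_sub_abs.mul_left _)

lemma tsum_heatKernelTerm_le (hν : 0 < ν) (hν' : ν ≤ 3/8) (z : Torus d) :
    ∑' l, heatKernelTerm d ν z l
      ≤ exp (-distSq 0 z / (2 * ν)) * ∑' l : Fin d → ℤ, ∏ i, exp (1 - |(l i : ℝ)|) := by
  rw [← tsum_mul_left]
  exact (summable_heatKernelTerm hν hν' z).tsum_le_tsum (heatKernelTerm_le hν hν' z)
    (summable_prod_exp_one_sub_abs.mul_left _)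

lemma exp_le_tsum_heatKernelTerm (hν : 0 < ν) (hν' : ν ≤ 3/8) (z : Torus d) :
    exp (-distSq 0 z / (2 * ν)) ≤ ∑' l, heatKernelTerm d ν z l := by
  rw [← sum_sq_liftT_add_neg_round z]
  exact (summable_heatKernelTerm hν hν' z).le_tsum (fun i => -round (liftT (z i)))
    fun _ _ => (exp_pos _).le

lemma heatKernel_pos (hν : 0 < ν) (hν' : ν ≤ 3/8) (z : Torus d) : 0 < heatKernel d ν z :=
  mul_pos (rpow_pos_of_pos (by positivity) _)
    ((exp_pos _).trans_le (exp_le_tsum_heatKernelTerm hν hν' z))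

lemma abs_mul_log_heatKernel_add_le (hν : 0 < ν) (hν' : ν ≤ 3/8) (z : Torus d) :
    |ν * log (heatKernel d ν z) + distSq 0 z / 2|
      ≤ d / 2 * |ν * log (2 * π * ν)|
        + ν * log (∑' l : Fin d → ℤ, ∏ i, exp (1 - |(l i : ℝ)|)) := by
  set C := ∑' l : Fin d → ℤ, ∏ i, exp (1 - |(l i : ℝ)|)
  set S := ∑' l, heatKernelTerm d ν z l
  have hS_lower := exp_le_tsum_heatKernelTerm hν hν' z
  have hS_upper := tsum_heatKernelTerm_le hν hν' z
  have hS : 0 < S := (exp_pos _).trans_le hS_lower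
  have hC : 0 < C := pos_of_mul_pos_right (hS.trans_le hS_upper) (exp_pos _).le
  have h2πν : 0 < 2 * π * ν := by positivity
  have hscale : ν * (-distSq 0 z / (2 * ν)) = -(distSq 0 z / 2) := by
    field_simp
  have hlog_lower : ν * (-distSq 0 z / (2 * ν)) ≤ ν * log S :=
    mul_le_mul_of_nonneg_left ((le_log_iff_exp_le hS).2 hS_lower) hν.le
  have hlog_upper : ν * log S ≤ ν * (-distSq 0 z / (2 * ν) + log C) := by
    refine mul_le_mul_of_nonneg_left ?_ hν.le
    have := log_le_log hS hS_upper
    rwa [log_mul (exp_pos _).ne' hC.ne', log_exp] at this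
  rw [mul_add, hscale] at hlog_upper
  rw [hscale] at hlog_lower
  have hsplit : ν * log (heatKernel d ν z) + distSq 0 z / 2
      = -(d / 2) * (ν * log (2 * π * ν)) + (ν * log S + distSq 0 z / 2) := by
    rw [heatKernel_eq_tsum, log_mul (rpow_pos_of_pos h2πν _).ne' hS.ne', log_rpow h2πν]
    ring
  rw [hsplit]
  calc _ ≤ |-(d / 2) * (ν * log (2 * π * ν))| + |ν * log S + distSq 0 z / 2| := abs_add_le _ _
    _ ≤ _ := by
      rw [abs_mul, abs_neg, abs_of_nonneg (by positivity : (0:ℝ) ≤ d / 2),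
        abs_of_nonneg (a := ν * log S + distSq 0 z / 2) (by linarith)]
      linarith

lemma measurable_heatKernel : Measurable (heatKernel d ν) :=
  (Measurable.tsum fun _ => ((Finset.measurable_sum _ fun i _ =>
    ((measurable_liftT.comp (measurable_pi_apply i)).add_const _).pow_const 2).neg.div_const
      _).exp).const_mul _

theorem tendstoUniformly_mul_log_heatKernel :
    TendstoUniformly (fun ν z => ν * log (heatKernel d ν z)) (fun z => -(distSq 0 z / 2))
      (𝓝[>] 0) := by
  set C := ∑' l : Fin d → ℤ, ∏ i, exp (1 - |(l i : ℝ)|)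
  have hml : Continuous fun ν : ℝ => ν * log (2 * π * ν) := by
    have hrescale : (fun ν : ℝ => ν * log (2 * π * ν))
        = fun ν => (2 * π)⁻¹ * ((2 * π * ν) * log (2 * π * ν)) := by
      funext ν
      field_simp
    rw [hrescale]
    exact continuous_const.mul (continuous_mul_log.comp' (continuous_const_mul _))
  have herr : Tendsto (fun ν : ℝ => d / 2 * |ν * log (2 * π * ν)| + ν * log C) (𝓝[>] 0) (𝓝 0) :=
    tendsto_nhdsWithin_of_tendsto_nhds <| by
      have hcont : Continuous fun ν : ℝ => d / 2 * |ν * log (2 * π * ν)| + ν * log C := by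
        fun_prop
      simpa using hcont.tendsto 0
  rw [Metric.tendstoUniformly_iff]
  intro ε hε
  filter_upwards [herr (gt_mem_nhds hε), Ioc_mem_nhdsGT (show (0:ℝ) < 3/8 by norm_num)]
    with ν hνε ⟨hν, hν'⟩ z
  rw [dist_comm, Real.dist_eq, sub_neg_eq_add]
  exact (abs_mul_log_heatKernel_add_le hν hν' z).trans_lt hνε

theorem tendstoUniformly_mul_log_heatKernel_sub :
    TendstoUniformly (fun ν (p : Torus d × Torus d) => ν * log (heatKernel d ν (p.2 - p.1)))
      (fun p => -(distSq p.1 p.2 / 2)) (𝓝[>] 0) := by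
  simpa only [Function.comp_def, distSq_zero_sub] using
    tendstoUniformly_mul_log_heatKernel.comp fun p : Torus d × Torus d => p.2 - p.1

end HeatKernel

/-- If `γ ∈ 𝒫(𝕋^d × 𝕋^d)` has finite relative entropy with respect to `Leb ⊗ Leb`,
then `ν·H(γ | R^ν_{0,1}) → (1/2)∫ dist(x,y)² dγ(x,y)` as `ν → 0⁺`. -/
theorem nu_mul_relEnt_tendsto (d : ℕ) (γ : Measure (Torus d × Torus d))
    [IsProbabilityMeasure γ]
    (hac : γ ≪ (volume : Measure (Torus d × Torus d)))
    (hfin : Integrable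
      (fun p => Real.log ((γ.rnDeriv (volume : Measure (Torus d × Torus d)) p).toReal)) γ) :
    Tendsto (fun ν : ℝ => ν * relEnt γ (Rnu01 d ν)) (nhdsWithin 0 (Set.Ioi 0))
      (nhds ((1/2) * ∫ p, distSq p.1 p.2 ∂γ)) := by
  have hsmall : ∀ᶠ ν in 𝓝[>] (0:ℝ), ν ∈ Set.Ioc 0 (3/8) := Ioc_mem_nhdsGT (by norm_num)
  have hU := tendstoUniformly_mul_log_heatKernel_sub (d := d)
  have hlim_int : Integrable (fun p : Torus d × Torus d => -(distSq p.1 p.2 / 2)) γ :=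
    Continuous.integrable_of_hasCompactSupport (by unfold distSq; fun_prop)
      (HasCompactSupport.of_compactSpace _)
  have hmeas (ν : ℝ) : Measurable fun p : Torus d × Torus d => heatKernel d ν (p.2 - p.1) :=
    measurable_heatKernel.comp (measurable_snd.sub measurable_fst)
  have hint := hU.eventually_integrable
    (.of_forall fun ν => ((hmeas ν).log.const_mul ν).aestronglyMeasurable) hlim_int
  have hrel : ∀ᶠ ν in 𝓝[>] 0, ν * relEnt γ volume - ∫ p, ν * log (heatKernel d ν (p.2 - p.1)) ∂γ
      = ν * relEnt γ (Rnu01 d ν) := by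
    filter_upwards [hsmall, hint] with ν ⟨hν, hν'⟩ hνint
    rw [Rnu01, relEnt_withDensity hac (hmeas ν)
      (ae_of_all _ fun p => heatKernel_pos hν hν' _) hfin
      ((integrable_const_mul_iff (isUnit_iff_ne_zero.2 hν.ne') _).1 hνint), integral_const_mul]
    ring
  have hH : Tendsto (fun ν => ν * relEnt γ volume) (𝓝[>] 0) (𝓝 0) :=
    tendsto_nhdsWithin_of_tendsto_nhds <| by
      simpa using (continuous_mul_const (relEnt γ volume)).tendsto 0
  convert (hH.sub (hU.tendsto_integral hint hlim_int)).congr' hrel using 2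
  rw [integral_neg, integral_div]
  ring

end
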